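/- Let p, q ∈ (0,1), φ ∈ [0,2π), n ≥ 1, Δp = 2p−1, Δq = 2q−1, μ₁ = √(pq), μ₂ = √((1−p)(1−q)). Let |0_p⟩, |1_p⟩ be the normalized even- and odd-parity components of (√p|0⟩ + √(1−p)|1⟩)^{⊗n}, and |0_q⟩, |1_q⟩ the normalized even- and odd-parity components of (√q|0⟩ + e^{iφ}√(1−q)|1⟩)^{⊗n}. Then ⟨0_q|0_p⟩ = ((μ₁ + e^{−iφ}μ₂)^n + (μ₁ − e^{−iφ}μ₂)^n) / √((1+Δp^n)(1+Δq^n)) and ⟨1_q|1_p⟩ = ((μ₁ + e^{−iφ}μ₂)^n − (μ₁ − e^{−iφ}μ₂)^n) / √((1−Δp^n)(1−Δq^n)). -/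

import Mathlib

/-!
Both parity components are superpositions of the Dicke states `vJ n j` with `j` of one parity,
and these states are orthonormal. The overlap is therefore a sum, over `j` of that parity, of
products of coefficients, which collapse to `C(n,j) μ₁^(n-j) (e^{-iφ} μ₂)^j` divided by the two
normalizations; that sum is the even (resp. odd) half of the binomial expansions of
`(μ₁ ± e^{-iφ} μ₂)^n`.
-/

open Matrix Complex Set Filter

noncomputable section

/-- Number of 1s in a bit string. -/
def ones {n : ℕ} (x : Fin n → Fin 2) : ℕ := (Finset.univ.filter fun i => x i = 1).card

/-- The `n`-fold tensor power of a one-qubit operator, as a matrix indexed by bit strings. -/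
def mpow (n : ℕ) (ρ : Matrix (Fin 2) (Fin 2) ℂ) :
    Matrix (Fin n → Fin 2) (Fin n → Fin 2) ℂ :=
  Matrix.of fun x y => ∏ i, ρ (x i) (y i)

/-- The parity operator ω = σ_z^{⊗n}: it multiplies a computational basis vector by
(-1)^(number of 1s). -/
def parityOp (n : ℕ) : Matrix (Fin n → Fin 2) (Fin n → Fin 2) ℂ :=
  Matrix.diagonal fun x => (-1 : ℂ) ^ ones x

/-- The ℤ₂-twirling Z[X] = ½ (X + ωXω). -/
def twirl {n : ℕ} (X : Matrix (Fin n → Fin 2) (Fin n → Fin 2) ℂ) :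
    Matrix (Fin n → Fin 2) (Fin n → Fin 2) ℂ :=
  (2 : ℂ)⁻¹ • (X + parityOp n * X * parityOp n)

/-- Rank-one projection |ψ⟩⟨ψ| on one qubit. -/
def projv (ψ : Fin 2 → ℂ) : Matrix (Fin 2) (Fin 2) ℂ := vecMulVec ψ (star ψ)

/-- Rank-one projection |ψ⟩⟨ψ| on n qubits. -/
def projN {n : ℕ} (ψ : (Fin n → Fin 2) → ℂ) :
    Matrix (Fin n → Fin 2) (Fin n → Fin 2) ℂ := vecMulVec ψ (star ψ)

def ket0 : Fin 2 → ℂ := ![1, 0]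

def ket1 : Fin 2 → ℂ := ![0, 1]

/-- The qubit state √p |0⟩ + e^{iφ} √(1-p) |1⟩. -/
def qubit (p φ : ℝ) : Fin 2 → ℂ :=
  ![(Real.sqrt p : ℂ), Complex.exp (Complex.I * φ) * (Real.sqrt (1 - p) : ℂ)]

/-- The qubit state √p |0⟩ + √(1-p) |1⟩. -/
def qubitR (p : ℝ) : Fin 2 → ℂ := ![(Real.sqrt p : ℂ), (Real.sqrt (1 - p) : ℂ)]

/-- |v_j⟩ = C(n,j)^{-1/2} Σ |0⟩^{⊗(n-j)}|1⟩^{⊗j}, the sum over all arrangements of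
bit strings with exactly j ones. -/
def vJ (n j : ℕ) : (Fin n → Fin 2) → ℂ :=
  fun x => if ones x = j then ((Real.sqrt (n.choose j) : ℂ))⁻¹ else 0

/-- The normalized even-parity component |0_p⟩ of (√p|0⟩ + e^{iφ}√(1-p)|1⟩)^{⊗n}:
|0_p⟩ = Σ_{j even} e^{ijφ} √( C(n,j) p^{n−j}(1−p)^j / (½(1+(2p-1)^n)) ) |v_j⟩. -/
def evenVec (n : ℕ) (p φ : ℝ) : (Fin n → Fin 2) → ℂ :=
  ∑ j ∈ (Finset.range (n + 1)).filter (fun j => Even j),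
    (Complex.exp (Complex.I * φ * j) *
      (Real.sqrt ((n.choose j : ℝ) * p ^ (n - j) * (1 - p) ^ j /
        ((1 + (2 * p - 1) ^ n) / 2)) : ℂ)) • vJ n j

/-- The normalized odd-parity component |1_p⟩ of (√p|0⟩ + e^{iφ}√(1-p)|1⟩)^{⊗n}:
|1_p⟩ = Σ_{j odd} e^{ijφ} √( C(n,j) p^{n−j}(1−p)^j / (½(1-(2p-1)^n)) ) |v_j⟩. -/
def oddVec (n : ℕ) (p φ : ℝ) : (Fin n → Fin 2) → ℂ :=
  ∑ j ∈ (Finset.range (n + 1)).filter (fun j => Odd j),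
    (Complex.exp (Complex.I * φ * j) *
      (Real.sqrt ((n.choose j : ℝ) * p ^ (n - j) * (1 - p) ^ j /
        ((1 - (2 * p - 1) ^ n) / 2)) : ℂ)) • vJ n j

/-- The inner product ⟨u|v⟩ = Σ_x conj(u x) (v x). -/
def innerC {n : ℕ} (u v : (Fin n → Fin 2) → ℂ) : ℂ := dotProduct (star u) v

open Finset

lemma card_filter_ones_eq (n j : ℕ) :
    #{x : Fin n → Fin 2 | ones x = j} = n.choose j := by
  have h := card_powersetCard j (univ : Finset (Fin n))
  rw [card_univ, Fintype.card_fin] at h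
  rw [← h]
  apply card_nbij' (fun x : Fin n → Fin 2 => ({i | x i = 1} : Finset (Fin n)))
    (fun s i => if i ∈ s then 1 else 0)
  · intro x hx
    rw [mem_coe, mem_filter] at hx
    simpa [mem_powersetCard, ones] using hx.2
  · intro s hs
    rw [mem_coe, mem_powersetCard] at hs
    rw [mem_coe, mem_filter]
    simpa [ones] using hs.2
  · intro x _
    funext i
    by_cases h : x i = 1
    · simp [h]
    · simp [h]; omega
  · intro s _
    ext i
    simp

lemma innerC_vJ_vJ {n j : ℕ} (hj : j ≤ n) (k : ℕ) :
    innerC (vJ n j) (vJ n k) = if j = k then 1 else 0 := by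
  have hC : (0 : ℝ) < n.choose j := mod_cast Nat.choose_pos hj
  unfold innerC dotProduct
  split_ifs with hjk
  · subst hjk
    have hsq : ∀ x : Fin n → Fin 2, star (vJ n j x) * vJ n j x
        = if ones x = j then ((n.choose j : ℝ)⁻¹ : ℂ) else 0 := by
      intro x
      split_ifs with h <;> simp [vJ, h, ← mul_inv, ← Complex.ofReal_mul,
        Real.mul_self_sqrt hC.le]
    simp only [Pi.star_apply, hsq]
    rw [← sum_filter, sum_const, card_filter_ones_eq, nsmul_eq_mul]
    push_cast
    exact mul_inv_cancel₀ (mod_cast hC.ne')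
  · refine sum_eq_zero fun x _ => ?_
    by_cases h : ones x = j
    · simp [vJ, h, hjk]
    · simp [vJ, h]

lemma innerC_sum_smul_sum_smul {n : ℕ} {ι : Type*} [DecidableEq ι] {S : Finset ι}
    {u : ι → (Fin n → Fin 2) → ℂ}
    (hu : ∀ j ∈ S, ∀ k, innerC (u j) (u k) = if j = k then 1 else 0) (c d : ι → ℂ) :
    innerC (∑ j ∈ S, c j • u j) (∑ k ∈ S, d k • u k) = ∑ j ∈ S, star (c j) * d j := by
  simp only [innerC] at hu
  simp only [innerC, star_sum, star_smul, sum_dotProduct, dotProduct_sum, smul_dotProduct,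
    dotProduct_smul, smul_eq_mul]
  refine sum_congr rfl fun k hk => ?_
  rw [sum_congr rfl fun j hj => by rw [hu j hj k]]
  simp [hk, mul_comm]

lemma add_pow_eq_sum_choose_mul_pow {R : Type*} [CommRing R] (w z : R) (n : ℕ) :
    (w + z) ^ n = ∑ j ∈ range (n + 1), (n.choose j * w ^ (n - j) * z ^ j : R) := by
  rw [add_comm, add_pow]
  exact sum_congr rfl fun j _ => by ring

lemma sub_pow_eq_sum_choose_mul_pow {R : Type*} [CommRing R] (w z : R) (n : ℕ) :
    (w - z) ^ n = ∑ j ∈ range (n + 1), (-1) ^ j * (n.choose j * w ^ (n - j) * z ^ j : R) := by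
  rw [sub_eq_add_neg, add_pow_eq_sum_choose_mul_pow]
  exact sum_congr rfl fun j _ => by ring

lemma sum_filter_even_choose_mul_pow {K : Type*} [Field K] [CharZero K] (w z : K) (n : ℕ) :
    ∑ j ∈ range (n + 1) with Even j, (n.choose j * w ^ (n - j) * z ^ j : K) =
      ((w + z) ^ n + (w - z) ^ n) / 2 := by
  rw [add_pow_eq_sum_choose_mul_pow, sub_pow_eq_sum_choose_mul_pow, ← sum_add_distrib, sum_div,
    sum_filter]
  refine sum_congr rfl fun j _ => ?_
  rcases Nat.even_or_odd j with h | h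
  · simp [h, h.neg_one_pow]
  · simp [Nat.not_even_iff_odd.mpr h, h.neg_one_pow]

lemma sum_filter_odd_choose_mul_pow {K : Type*} [Field K] [CharZero K] (w z : K) (n : ℕ) :
    ∑ j ∈ range (n + 1) with Odd j, (n.choose j * w ^ (n - j) * z ^ j : K) =
      ((w + z) ^ n - (w - z) ^ n) / 2 := by
  rw [add_pow_eq_sum_choose_mul_pow, sub_pow_eq_sum_choose_mul_pow, ← sum_sub_distrib, sum_div,
    sum_filter]
  refine sum_congr rfl fun j _ => ?_
  rcases Nat.even_or_odd j with h | h
  · simp [Nat.not_odd_iff_even.mpr h, h.neg_one_pow]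
  · simp [h, h.neg_one_pow]

lemma sqrt_pow_of_nonneg {x : ℝ} (hx : 0 ≤ x) (k : ℕ) : √(x ^ k) = √x ^ k := by
  rw [← Real.sqrt_sq (pow_nonneg (Real.sqrt_nonneg x) k), ← pow_mul, mul_comm, pow_mul,
    Real.sq_sqrt hx]

lemma sqrt_mul_pow_mul_pow_div {a b : ℝ} (ha : 0 ≤ a) (hb : 0 ≤ b) {C : ℝ} (hC : 0 ≤ C)
    (m k : ℕ) (N : ℝ) : √(C * a ^ m * b ^ k / N) = √C * √a ^ m * √b ^ k / √N := by
  rw [Real.sqrt_div (by positivity), Real.sqrt_mul (by positivity), Real.sqrt_mul hC,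
    sqrt_pow_of_nonneg ha, sqrt_pow_of_nonneg hb]

def dickeSum (P : ℕ → Prop) [DecidablePred P] (n : ℕ) (p φ N : ℝ) : (Fin n → Fin 2) → ℂ :=
  ∑ j ∈ (range (n + 1)).filter P,
    (Complex.exp (Complex.I * φ * j) *
      (√((n.choose j : ℝ) * p ^ (n - j) * (1 - p) ^ j / N) : ℂ)) • vJ n j

lemma evenVec_eq_dickeSum (n : ℕ) (p φ : ℝ) :
    evenVec n p φ = dickeSum (fun j => Even j) n p φ ((1 + (2 * p - 1) ^ n) / 2) := rfl

lemma oddVec_eq_dickeSum (n : ℕ) (p φ : ℝ) :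
    oddVec n p φ = dickeSum (fun j => Odd j) n p φ ((1 - (2 * p - 1) ^ n) / 2) := rfl

lemma sqrt_coeff_mul_sqrt_coeff {p q : ℝ} (hp : p ∈ Set.Icc 0 1) (hq : q ∈ Set.Icc 0 1)
    {C : ℝ} (hC : 0 ≤ C) (m k : ℕ) (Np Nq : ℝ) :
    √(C * q ^ m * (1 - q) ^ k / Nq) * √(C * p ^ m * (1 - p) ^ k / Np) =
      C * √(p * q) ^ m * √((1 - p) * (1 - q)) ^ k / (√Np * √Nq) := by
  obtain ⟨hp0, hp1⟩ := hp
  obtain ⟨hq0, hq1⟩ := hq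
  rw [sqrt_mul_pow_mul_pow_div hp0 (sub_nonneg.2 hp1) hC,
    sqrt_mul_pow_mul_pow_div hq0 (sub_nonneg.2 hq1) hC, Real.sqrt_mul hp0,
    Real.sqrt_mul (sub_nonneg.2 hp1)]
  linear_combination ((√p * √q) ^ m * (√(1 - p) * √(1 - q)) ^ k / (√Np * √Nq)) *
    Real.mul_self_sqrt hC

lemma star_coeff_mul_coeff {p q : ℝ} (hp : p ∈ Set.Icc 0 1) (hq : q ∈ Set.Icc 0 1)
    (φ ψ Np Nq : ℝ) (n j : ℕ) :
    star (Complex.exp (Complex.I * φ * j) *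
        (√((n.choose j : ℝ) * q ^ (n - j) * (1 - q) ^ j / Nq) : ℂ)) *
      (Complex.exp (Complex.I * ψ * j) *
        (√((n.choose j : ℝ) * p ^ (n - j) * (1 - p) ^ j / Np) : ℂ)) =
    n.choose j * (√(p * q) : ℂ) ^ (n - j) *
        (Complex.exp (Complex.I * (ψ - φ)) * (√((1 - p) * (1 - q)) : ℂ)) ^ j /
      (√Np * √Nq : ℝ) := by
  have hphase : starRingEnd ℂ (Complex.exp (Complex.I * φ * j)) *
      Complex.exp (Complex.I * ψ * j) = Complex.exp (Complex.I * (ψ - φ)) ^ j := by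
    rw [← Complex.exp_conj, ← Complex.exp_add, ← Complex.exp_nat_mul]
    congr 1
    simp [Complex.conj_ofReal]
    ring
  have hmod := congrArg (fun x : ℝ => (x : ℂ))
    (sqrt_coeff_mul_sqrt_coeff hp hq (Nat.cast_nonneg (n.choose j)) (n - j) j Np Nq)
  push_cast at hmod
  rw [star_mul', Complex.star_def, Complex.conj_ofReal, Complex.ofReal_mul, mul_mul_mul_comm,
    hphase, hmod]
  ring

lemma innerC_dickeSum (P : ℕ → Prop) [DecidablePred P] (n : ℕ) {p q : ℝ}
    (hp : p ∈ Set.Icc 0 1) (hq : q ∈ Set.Icc 0 1) (φ ψ Np Nq : ℝ) :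
    innerC (dickeSum P n q φ Nq) (dickeSum P n p ψ Np) =
      (∑ j ∈ (range (n + 1)).filter P, n.choose j * (√(p * q) : ℂ) ^ (n - j) *
        (Complex.exp (Complex.I * (ψ - φ)) * (√((1 - p) * (1 - q)) : ℂ)) ^ j) /
      (√Np * √Nq : ℝ) := by
  have horth : ∀ j ∈ (range (n + 1)).filter P, ∀ k,
      innerC (vJ n j) (vJ n k) = if j = k then 1 else 0 := fun j hj =>
    innerC_vJ_vJ (Nat.lt_succ_iff.mp (mem_range.mp (mem_filter.mp hj).1))
  rw [dickeSum, dickeSum, innerC_sum_smul_sum_smul horth, sum_div]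
  exact sum_congr rfl fun j _ => star_coeff_mul_coeff hp hq φ ψ Np Nq n j

lemma abs_two_mul_sub_one_pow_le_one {p : ℝ} (hp : p ∈ Set.Icc 0 1) (n : ℕ) :
    |(2 * p - 1) ^ n| ≤ 1 := by
  rw [abs_pow]
  exact pow_le_one₀ (abs_nonneg _) (abs_le.mpr ⟨by linarith [hp.1], by linarith [hp.2]⟩)

lemma sqrt_half_mul_sqrt_half {X : ℝ} (hX : 0 ≤ X) (Y : ℝ) :
    √(X / 2) * √(Y / 2) = √(X * Y) / 2 := by
  rw [← Real.sqrt_mul (by positivity), div_mul_div_comm, Real.sqrt_div' _ (by norm_num),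
    show (2 : ℝ) * 2 = 2 ^ 2 by norm_num, Real.sqrt_sq (by norm_num)]

theorem parity_component_overlaps (p q φ : ℝ) (hp : p ∈ Set.Ioo (0 : ℝ) 1)
    (hq : q ∈ Set.Ioo (0 : ℝ) 1) (n : ℕ) :
    innerC (evenVec n q φ) (evenVec n p 0) =
      (((Real.sqrt (p * q) : ℂ) +
          Complex.exp (-(Complex.I * φ)) * (Real.sqrt ((1 - p) * (1 - q)) : ℂ)) ^ n +
        ((Real.sqrt (p * q) : ℂ) -
          Complex.exp (-(Complex.I * φ)) * (Real.sqrt ((1 - p) * (1 - q)) : ℂ)) ^ n) /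
      ((Real.sqrt ((1 + (2 * p - 1) ^ n) * (1 + (2 * q - 1) ^ n)) : ℝ) : ℂ) ∧
    innerC (oddVec n q φ) (oddVec n p 0) =
      (((Real.sqrt (p * q) : ℂ) +
          Complex.exp (-(Complex.I * φ)) * (Real.sqrt ((1 - p) * (1 - q)) : ℂ)) ^ n -
        ((Real.sqrt (p * q) : ℂ) -
          Complex.exp (-(Complex.I * φ)) * (Real.sqrt ((1 - p) * (1 - q)) : ℂ)) ^ n) /
      ((Real.sqrt ((1 - (2 * p - 1) ^ n) * (1 - (2 * q - 1) ^ n)) : ℝ) : ℂ) := by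
  have hp' := Set.Ioo_subset_Icc_self hp
  have hq' := Set.Ioo_subset_Icc_self hq
  obtain ⟨hΔp₁, hΔp₂⟩ := abs_le.mp (abs_two_mul_sub_one_pow_le_one hp' n)
  have hphase : Complex.I * ((0 : ℝ) - φ) = -(Complex.I * φ) := by push_cast; ring
  constructor
  · rw [evenVec_eq_dickeSum, evenVec_eq_dickeSum, innerC_dickeSum _ n hp' hq', hphase,
      sum_filter_even_choose_mul_pow, sqrt_half_mul_sqrt_half (by linarith), Complex.ofReal_div,
      Complex.ofReal_ofNat, div_div_div_cancel_right₀ two_ne_zero]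
  · rw [oddVec_eq_dickeSum, oddVec_eq_dickeSum, innerC_dickeSum _ n hp' hq', hphase,
      sum_filter_odd_choose_mul_pow, sqrt_half_mul_sqrt_half (by linarith), Complex.ofReal_div,
      Complex.ofReal_ofNat, div_div_div_cancel_right₀ two_ne_zero]
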